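/- Let c, d be positive integers with gcd(c,d) = 1 and d ≤ c, and let A ⊆ ZMod c be a maximally even set of cardinality d. Then the image d·A = {d·a : a ∈ A} consists of d consecutive elements of ZMod c: there exists k ∈ ZMod c such that d·A = {k + (j : ZMod c) : j = 1, …, d}. -/

import Mathlib

/-- The discrete Fourier transform of a finite subset `A` of `ZMod c`:
`F_A(t) = ∑_{k ∈ A} exp(-2πi·(k.val)·(t.val)/c)`. -/
noncomputable def fourierTransform (c : ℕ) (A : Finset (ZMod c)) (t : ZMod c) : ℂ :=
  ∑ k ∈ A, Complex.exp (-2 * Real.pi * Complex.I * ((k.val : ℂ) * (t.val : ℂ)) / c)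

/-- `A ⊆ ZMod c` is maximally even of cardinality `d` if `A` has cardinality `d` and
`|F_A(d)| ≥ |F_B(d)|` for every subset `B` of cardinality `d`. -/
def MaximallyEven (c d : ℕ) (A : Finset (ZMod c)) : Prop :=
  A.card = d ∧ ∀ B : Finset (ZMod c), B.card = d →
    ‖fourierTransform c B (d : ZMod c)‖ ≤
      ‖fourierTransform c A (d : ZMod c)‖

open Complex Finset

noncomputable def ee (c : ℕ) (v : ZMod c) : ℂ :=
  Complex.exp (-2 * Real.pi * Complex.I * (v.val : ℂ) / c)

lemma exp_mod (c : ℕ) (hc : 0 < c) (n : ℕ) :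
    Complex.exp (-2 * Real.pi * Complex.I * ((n % c : ℕ) : ℂ) / c) =
      Complex.exp (-2 * Real.pi * Complex.I * (n : ℂ) / c) := by
  have hcC : (c : ℂ) ≠ 0 := Nat.cast_ne_zero.mpr hc.ne'
  have h : (-2 * Real.pi * Complex.I * (n : ℂ) / c)
      = -2 * Real.pi * Complex.I * ((n % c : ℕ) : ℂ) / c
        + (-((n / c : ℕ) : ℂ)) * (2 * Real.pi * Complex.I) := by
    have hn : (n : ℂ) = c * ((n / c : ℕ) : ℂ) + ((n % c : ℕ) : ℂ) := by
      exact_mod_cast congrArg (Nat.cast : ℕ → ℂ) (Nat.div_add_mod n c).symm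
    rw [hn]; field_simp; ring
  have h2 : Complex.exp ((-((n / c : ℕ) : ℂ)) * (2 * Real.pi * Complex.I)) = 1 := by
    have := Complex.exp_int_mul_two_pi_mul_I (-(n / c : ℕ) : ℤ)
    push_cast at this
    exact this
  rw [h, Complex.exp_add, h2, mul_one]

noncomputable def gsum (c : ℕ) (T : Finset (ZMod c)) : ℂ := ∑ v ∈ T, ee c v

section main
variable (c d : ℕ)

lemma mul_d_inj (hgcd : Nat.gcd c d = 1) [NeZero c] :
    Function.Injective (fun a : ZMod c => (d : ZMod c) * a) := by
  have hco : Nat.Coprime d c := Nat.coprime_comm.mp hgcd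
  have hu : IsUnit (d : ZMod c) := by
    refine ⟨ZMod.unitOfCoprime d hco, ?_⟩
    simp [ZMod.unitOfCoprime]
  exact hu.mul_right_injective

lemma ft_eq_gsum (hc : 0 < c) (hdlt : d < c) (hgcd : Nat.gcd c d = 1) [NeZero c] (B : Finset (ZMod c)) :
    fourierTransform c B (d : ZMod c) = gsum c (B.image (fun a => (d : ZMod c) * a)) := by
  have hinj : Function.Injective (fun a : ZMod c => (d : ZMod c) * a) :=
    mul_d_inj c d hgcd
  rw [gsum, Finset.sum_image (fun x _ y _ h => hinj h)]
  unfold fourierTransform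
  apply Finset.sum_congr rfl
  intro k _
  show _ = ee c ((d : ZMod c) * k)
  rw [ee]
  have hval : ((d : ZMod c) * k).val = (d * k.val) % c := by
    rw [ZMod.val_mul, ZMod.val_natCast_of_lt hdlt]
  rw [hval, exp_mod c hc (d * k.val), ZMod.val_natCast_of_lt hdlt]
  push_cast
  ring_nf

lemma max_transfer (hc : 0 < c) (hdlt : d < c) (hgcd : Nat.gcd c d = 1) [NeZero c]
    (A : Finset (ZMod c)) (hA : MaximallyEven c d A)
    (T : Finset (ZMod c)) (hT : T.card = d) :
    ‖gsum c T‖ ≤ ‖gsum c (A.image (fun a => (d : ZMod c) * a))‖ := by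
  have hco : Nat.Coprime d c := Nat.coprime_comm.mp hgcd
  set u : (ZMod c)ˣ := ZMod.unitOfCoprime d hco with hu
  have hud : (u : ZMod c) = (d : ZMod c) := by simp [hu, ZMod.unitOfCoprime]
  set B : Finset (ZMod c) := T.image (fun t => ((u⁻¹ : (ZMod c)ˣ) : ZMod c) * t) with hB
  have hBcard : B.card = d := by
    rw [hB, Finset.card_image_of_injective _ (Units.isUnit u⁻¹).mul_right_injective, hT]
  have hBT : B.image (fun a => (d : ZMod c) * a) = T := by
    rw [hB, Finset.image_image]
    have : ((fun a => (d : ZMod c) * a) ∘ fun t => ((u⁻¹ : (ZMod c)ˣ) : ZMod c) * t) = id := by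
      funext t
      simp [Function.comp, ← mul_assoc, ← hud, ← Units.val_mul]
    rw [this, Finset.image_id]
  have h := hA.2 B hBcard
  rwa [ft_eq_gsum c d hc hdlt hgcd B, ft_eq_gsum c d hc hdlt hgcd A, hBT] at h

lemma omega_pow_ne_one (hc : 0 < c) (k : ℕ) (hk0 : 0 < k) (hkc : k < c) :
    Complex.exp (-2 * Real.pi * Complex.I / c) ^ k ≠ 1 := by
  have hcC : (c : ℂ) ≠ 0 := Nat.cast_ne_zero.mpr hc.ne'
  rw [← Complex.exp_nat_mul]
  intro h
  rw [Complex.exp_eq_one_iff] at h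
  obtain ⟨n, hn⟩ := h
  have hI : (Complex.I : ℂ) ≠ 0 := Complex.I_ne_zero
  have hpi : (Real.pi : ℂ) ≠ 0 := by
    exact_mod_cast Real.pi_ne_zero
  have h2 : (k : ℂ) = -n * c := by
    field_simp at hn
    have h2pi : (2 * (Real.pi:ℂ) * Complex.I) ≠ 0 := by
      simp [hpi, hI]
    have hcl : ((k:ℂ)) * (2 * (Real.pi:ℂ) * Complex.I) = (-n * c) * (2 * (Real.pi:ℂ) * Complex.I) := by
      linear_combination (-(2 * (Real.pi:ℂ) * Complex.I)) * hn
    exact mul_right_cancel₀ h2pi hcl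
  have h3 : (k : ℤ) = -n * c := by exact_mod_cast h2
  have hdvd : (c : ℤ) ∣ (k : ℤ) := ⟨-n, by linarith [h3]⟩
  have := Int.le_of_dvd (by exact_mod_cast hk0) hdvd
  omega

lemma ee_eq_pow (v : ZMod c) : ee c v = Complex.exp (-2 * Real.pi * Complex.I / c) ^ v.val := by
  rw [ee, ← Complex.exp_nat_mul]
  congr 1
  ring

lemma arc_card (hdlt : d < c) [NeZero c] :
    ((Finset.Icc 1 d).image (fun j : ℕ => (j : ZMod c))).card = d := by
  rw [Finset.card_image_of_injOn, Nat.card_Icc]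
  · omega
  · intro x hx y hy hxy
    simp only [Finset.coe_Icc, Set.mem_Icc] at hx hy
    have hx' : ((x : ZMod c)).val = x := ZMod.val_natCast_of_lt (by omega)
    have hy' : ((y : ZMod c)).val = y := ZMod.val_natCast_of_lt (by omega)
    rw [← hx', ← hy']
    exact congrArg ZMod.val hxy

lemma arc_gsum_ne_zero (hc : 0 < c) (hd : 0 < d) (hdlt : d < c) [NeZero c] :
    gsum c ((Finset.Icc 1 d).image (fun j : ℕ => (j : ZMod c))) ≠ 0 := by
  set ω := Complex.exp (-2 * Real.pi * Complex.I / c) with hω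
  have hω0 : ω ≠ 0 := Complex.exp_ne_zero _
  have hω1 : ω ≠ 1 := by
    have := omega_pow_ne_one c hc 1 one_pos (by omega)
    rwa [pow_one] at this
  have hinj : ∀ x ∈ Finset.Icc 1 d, ∀ y ∈ Finset.Icc 1 d,
      (x : ZMod c) = (y : ZMod c) → x = y := by
    intro x hx y hy hxy
    simp only [Finset.mem_Icc] at hx hy
    have hx' : ((x : ZMod c)).val = x := ZMod.val_natCast_of_lt (by omega)
    have hy' : ((y : ZMod c)).val = y := ZMod.val_natCast_of_lt (by omega)
    rw [← hx', ← hy']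
    exact congrArg ZMod.val hxy
  have hsum : gsum c ((Finset.Icc 1 d).image (fun j : ℕ => (j : ZMod c)))
      = ∑ j ∈ Finset.Icc 1 d, ω ^ j := by
    rw [gsum, Finset.sum_image hinj]
    apply Finset.sum_congr rfl
    intro j hj
    simp only [Finset.mem_Icc] at hj
    rw [ee_eq_pow, ZMod.val_natCast_of_lt (by omega)]
  rw [hsum]
  -- ∑_{j=1}^d ω^j = ω * ∑_{i ∈ range d} ω^i
  have hre : ∑ j ∈ Finset.Icc 1 d, ω ^ j = ω * ∑ i ∈ Finset.range d, ω ^ i := by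
    rw [Finset.mul_sum]
    rw [show Finset.Icc 1 d = Finset.image (fun i => i + 1) (Finset.range d) by
      ext x
      simp only [Finset.mem_Icc, Finset.mem_image, Finset.mem_range]
      constructor
      · rintro ⟨h1, h2⟩; exact ⟨x - 1, by omega, by omega⟩
      · rintro ⟨i, hi, rfl⟩; omega]
    rw [Finset.sum_image (by intro x _ y _ h; simp only at h; omega)]
    apply Finset.sum_congr rfl
    intro i _
    rw [pow_succ]; ring
  rw [hre, geom_sum_eq hω1]
  have hωd : ω ^ d ≠ 1 := omega_pow_ne_one c hc d hd hdlt
  intro h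
  rcases mul_eq_zero.mp h with h1 | h2
  · exact hω0 h1
  · rw [div_eq_zero_iff] at h2
    rcases h2 with h2 | h2
    · exact hωd (by linear_combination h2)
    · exact hω1 (by linear_combination h2)

lemma exchange [NeZero c] (S : Finset (ZMod c))
    (hmax : ∀ T : Finset (ZMod c), T.card = S.card →
      ‖gsum c T‖ ≤ ‖gsum c S‖)
    (a b : ZMod c) (ha : a ∈ S) (hb : b ∉ S) :
    ((starRingEnd ℂ) (gsum c S) * ee c b).re ≤ ((starRingEnd ℂ) (gsum c S) * ee c a).re := by
  set w := (starRingEnd ℂ) (gsum c S) with hw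
  set T : Finset (ZMod c) := insert b (S.erase a) with hT
  have hbe : b ∉ S.erase a := fun h => hb (Finset.mem_of_mem_erase h)
  have hTcard : T.card = S.card := by
    rw [hT, Finset.card_insert_of_notMem hbe, Finset.card_erase_of_mem ha]
    have : 1 ≤ S.card := Finset.card_pos.mpr ⟨a, ha⟩
    omega
  have hgT : gsum c T = gsum c S - ee c a + ee c b := by
    rw [hT, gsum, Finset.sum_insert hbe, Finset.sum_erase_eq_sub ha]
    rw [gsum]; ring
  have h1 : (w * gsum c T).re ≤ ‖gsum c S‖ ^ 2 := by
    calc (w * gsum c T).re ≤ ‖w * gsum c T‖ := Complex.re_le_norm _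
      _ = ‖w‖ * ‖gsum c T‖ := by rw [norm_mul]
      _ ≤ ‖w‖ * ‖gsum c S‖ :=
          mul_le_mul_of_nonneg_left (hmax T hTcard) (norm_nonneg _)
      _ = ‖gsum c S‖ ^ 2 := by
          rw [hw, Complex.norm_conj]; ring
  have h2 : (w * gsum c S).re = ‖gsum c S‖ ^ 2 := by
    rw [hw, mul_comm, Complex.mul_conj]
    rw [← Complex.sq_norm]
    exact Complex.ofReal_re _
  have h3 : (w * gsum c T).re = (w * gsum c S).re - (w * ee c a).re + (w * ee c b).re := by
    rw [hgT, mul_add, mul_sub, Complex.add_re, Complex.sub_re]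
  rw [h3, h2] at h1
  linarith

lemma f_formula (hc : 0 < c) (w : ℂ) (v : ZMod c) :
    (w * ee c v).re
      = ‖w‖ * Real.cos (Complex.arg w - 2 * Real.pi * v.val / c) := by
  have hcR : (c : ℝ) ≠ 0 := Nat.cast_ne_zero.mpr hc.ne'
  conv_lhs => rw [← Complex.norm_mul_exp_arg_mul_I w]
  have hee : ee c v = Complex.exp (((-(2 * Real.pi * v.val / c) : ℝ) : ℂ) * Complex.I) := by
    rw [ee]; congr 1; push_cast; field_simp
  rw [hee, mul_assoc, ← Complex.exp_add]
  have : (Complex.arg w : ℂ) * Complex.I + ((-(2 * Real.pi * v.val / c) : ℝ) : ℂ) * Complex.I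
      = ((Complex.arg w - 2 * Real.pi * v.val / c : ℝ) : ℂ) * Complex.I := by
    push_cast; ring
  rw [this, Complex.re_ofReal_mul, Complex.exp_ofReal_mul_I_re]

noncomputable def repZ (γ : ℝ) (v : ZMod c) : ℤ :=
  (v.val : ℤ) + c * ⌈(γ - c / 2 - v.val) / c⌉

lemma repZ_cast [NeZero c] (γ : ℝ) (v : ZMod c) : ((repZ c γ v : ℤ) : ZMod c) = v := by
  rw [repZ]
  push_cast
  simp [ZMod.natCast_self, ZMod.natCast_val, ZMod.cast_id]

lemma repZ_lb (hc : 0 < c) (γ : ℝ) (v : ZMod c) : γ - c / 2 ≤ (repZ c γ v : ℝ) := by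
  have hc' : (0 : ℝ) < c := by exact_mod_cast hc
  set x := (γ - c / 2 - v.val) / c with hx
  have hm := Int.le_ceil x
  have h1 : (c : ℝ) * x ≤ c * (⌈x⌉ : ℝ) := by nlinarith
  have h2 : (c : ℝ) * x = γ - c / 2 - v.val := by rw [hx]; field_simp
  have : (repZ c γ v : ℝ) = (v.val : ℝ) + c * (⌈x⌉ : ℝ) := by rw [repZ]; push_cast; ring
  linarith [this.ge, this.le]

lemma repZ_ub (hc : 0 < c) (γ : ℝ) (v : ZMod c) : (repZ c γ v : ℝ) < γ + c / 2 := by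
  have hc' : (0 : ℝ) < c := by exact_mod_cast hc
  set x := (γ - c / 2 - v.val) / c with hx
  have hm := Int.ceil_lt_add_one x
  have h1 : (c : ℝ) * (⌈x⌉ : ℝ) < c * (x + 1) := by nlinarith
  have h2 : (c : ℝ) * x = γ - c / 2 - v.val := by rw [hx]; field_simp
  have : (repZ c γ v : ℝ) = (v.val : ℝ) + c * (⌈x⌉ : ℝ) := by rw [repZ]; push_cast; ring
  nlinarith

lemma repZ_uniq [NeZero c] (hc : 0 < c) (γ : ℝ) (y : ℤ)
    (h1 : γ - c / 2 ≤ (y : ℝ)) (h2 : (y : ℝ) < γ + c / 2) :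
    repZ c γ ((y : ZMod c)) = y := by
  have hc' : (0 : ℝ) < c := by exact_mod_cast hc
  have hcast : ((repZ c γ ((y : ZMod c)) : ℤ) : ZMod c) = (y : ZMod c) := repZ_cast c γ _
  have hdvd : (c : ℤ) ∣ repZ c γ ((y : ZMod c)) - y := by
    rw [← ZMod.intCast_zmod_eq_zero_iff_dvd]
    push_cast
    rw [sub_eq_zero]
    exact_mod_cast hcast
  obtain ⟨t, ht⟩ := hdvd
  have hb1 := repZ_lb c hc γ ((y : ZMod c))
  have hb2 := repZ_ub c hc γ ((y : ZMod c))
  have hR : (repZ c γ ((y : ZMod c)) : ℝ) - (y : ℝ) = (c : ℝ) * (t : ℝ) := by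
    exact_mod_cast congrArg (Int.cast : ℤ → ℝ) ht
  have ht1 : (-1 : ℝ) < (t : ℝ) := by nlinarith
  have ht2 : (t : ℝ) < 1 := by nlinarith
  have ht0 : t = 0 := by
    have ht1' : (-1 : ℤ) < t := by exact_mod_cast ht1
    have ht2' : t < 1 := by exact_mod_cast ht2
    omega
  rw [ht0, mul_zero] at ht
  omega

lemma int_no_gaps (T : Finset ℤ) (hne : T.Nonempty)
    (hgap : ∀ x ∈ T, ∀ z ∈ T, ∀ y : ℤ, x < y → y < z → y ∈ T) :
    T = Finset.Icc (T.min' hne) (T.max' hne) := by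
  apply Finset.Subset.antisymm
  · intro y hy
    rw [Finset.mem_Icc]
    exact ⟨Finset.min'_le _ _ hy, Finset.le_max' _ _ hy⟩
  · intro y hy
    rw [Finset.mem_Icc] at hy
    rcases eq_or_lt_of_le hy.1 with h | h
    · rw [← h]; exact T.min'_mem hne
    rcases eq_or_lt_of_le hy.2 with h2 | h2
    · rw [h2]; exact T.max'_mem hne
    exact hgap _ (T.min'_mem hne) _ (T.max'_mem hne) y h h2

lemma cos_dist_mono (hc : 0 < c) (R : ℝ) (hR : 0 < R) (γ p q : ℝ)
    (hp1 : γ - c / 2 ≤ p) (hp2 : p < γ + c / 2)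
    (hq1 : γ - c / 2 ≤ q) (hq2 : q < γ + c / 2)
    (h : R * Real.cos (2 * Real.pi * (γ - q) / c) ≤ R * Real.cos (2 * Real.pi * (γ - p) / c)) :
    |γ - p| ≤ |γ - q| := by
  have hc' : (0 : ℝ) < c := by exact_mod_cast hc
  have hπ := Real.pi_pos
  by_contra hlt
  push_neg at hlt
  set x := 2 * Real.pi * |γ - q| / c with hxd
  set y := 2 * Real.pi * |γ - p| / c with hyd
  have hx0 : 0 ≤ x := by positivity
  have hxy : x < y := by
    rw [hxd, hyd]
    gcongr
  have hyπ : y ≤ Real.pi := by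
    have habs : |γ - p| ≤ c / 2 := abs_le.mpr ⟨by linarith, by linarith⟩
    rw [hyd, div_le_iff₀ hc']
    nlinarith
  have hcos := Real.cos_lt_cos_of_nonneg_of_le_pi hx0 hyπ hxy
  have hcp : Real.cos (2 * Real.pi * (γ - p) / c) = Real.cos y := by
    rw [hyd, show 2 * Real.pi * |γ - p| / c = |2 * Real.pi * (γ - p) / c| by
      rw [abs_div, abs_mul, abs_of_pos (by positivity : (0:ℝ) < 2 * Real.pi),
        abs_of_pos hc'], Real.cos_abs]
  have hcq : Real.cos (2 * Real.pi * (γ - q) / c) = Real.cos x := by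
    rw [hxd, show 2 * Real.pi * |γ - q| / c = |2 * Real.pi * (γ - q) / c| by
      rw [abs_div, abs_mul, abs_of_pos (by positivity : (0:ℝ) < 2 * Real.pi),
        abs_of_pos hc'], Real.cos_abs]
  rw [hcp, hcq] at h
  nlinarith

lemma f_rep (hc : 0 < c) [NeZero c] (w : ℂ) (v : ZMod c) :
    (w * ee c v).re
      = ‖w‖ *
        Real.cos (2 * Real.pi * ((c * Complex.arg w / (2 * Real.pi))
          - (repZ c (c * Complex.arg w / (2 * Real.pi)) v : ℝ)) / c) := by
  have hc' : (0 : ℝ) < c := by exact_mod_cast hc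
  have hπ := Real.pi_pos
  rw [f_formula c hc]
  congr 1
  set γ : ℝ := c * Complex.arg w / (2 * Real.pi) with hγ
  set m : ℤ := ⌈(γ - c / 2 - v.val) / c⌉ with hm
  have hrep : (repZ c γ v : ℝ) = (v.val : ℝ) + c * (m : ℝ) := by
    rw [repZ]; push_cast; ring
  have hangle : 2 * Real.pi * (γ - (repZ c γ v : ℝ)) / c
      = (Complex.arg w - 2 * Real.pi * v.val / c) - m * (2 * Real.pi) := by
    rw [hrep, hγ]
    field_simp
    ring
  rw [hangle, Real.cos_sub_int_mul_two_pi]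

end main

/-- If `gcd(c,d) = 1` and `A ⊆ ZMod c` is maximally even of cardinality `d`, then
`d·A` consists of `d` consecutive elements: `d·A = {k+1, k+2, …, k+d}` for some `k`. -/
theorem mul_image_maximallyEven_consecutive (c d : ℕ) (hc : 0 < c) (hd : 0 < d)
    (hdc : d ≤ c) (hgcd : Nat.gcd c d = 1)
    (A : Finset (ZMod c)) (hA : MaximallyEven c d A) :
    ∃ k : ZMod c,
      A.image (fun a => (d : ZMod c) * a) =
        (Finset.Icc 1 d).image (fun j : ℕ => k + (j : ZMod c)) := by
  haveI : NeZero c := ⟨hc.ne'⟩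
  by_cases hc1 : c = 1
  · subst hc1
    have hd1 : d = 1 := by omega
    subst hd1
    obtain ⟨a, ha⟩ := Finset.card_eq_one.mp hA.1
    refine ⟨0, Finset.ext fun x => ⟨fun _ => ?_, fun _ => ?_⟩⟩
    · exact Finset.mem_image.mpr ⟨1, by simp, Subsingleton.elim _ _⟩
    · rw [ha]
      exact Finset.mem_image.mpr ⟨a, Finset.mem_singleton_self a, Subsingleton.elim _ _⟩
  -- main case : 1 ≤ d < c
  have hdlt : d < c := by
    rcases lt_or_eq_of_le hdc with h | h
    · exact h
    · exfalso; rw [h, Nat.gcd_self] at hgcd; exact hc1 hgcd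
  set S : Finset (ZMod c) := A.image (fun a => (d : ZMod c) * a) with hS
  have hScard : S.card = d := by
    rw [hS, Finset.card_image_of_injective _ (mul_d_inj c d hgcd), hA.1]
  have hmax : ∀ T : Finset (ZMod c), T.card = d →
      ‖gsum c T‖ ≤ ‖gsum c S‖ :=
    fun T hT => max_transfer c d hc hdlt hgcd A hA T hT
  have hSne : gsum c S ≠ 0 := by
    intro h0
    have harc := hmax _ (arc_card c d hdlt)
    rw [h0] at harc
    simp only [norm_zero] at harc
    exact arc_gsum_ne_zero c d hc hd hdlt
      (by
        have := le_antisymm harc (norm_nonneg _)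
        exact norm_eq_zero.mp this)
  set w : ℂ := (starRingEnd ℂ) (gsum c S) with hw
  have hR : 0 < ‖w‖ := by
    rw [hw, Complex.norm_conj]
    exact norm_pos_iff.mpr hSne
  set γ : ℝ := (c : ℝ) * Complex.arg w / (2 * Real.pi) with hγ
  have hdist : ∀ a ∈ S, ∀ b ∉ S, |γ - (repZ c γ a : ℝ)| ≤ |γ - (repZ c γ b : ℝ)| := by
    intro a ha b hb
    have hex := exchange c S (fun T hT => hmax T (hT.trans hScard)) a b ha hb
    rw [← hw, f_rep c hc w a, f_rep c hc w b, ← hγ] at hex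
    exact cos_dist_mono c hc _ hR γ _ _ (repZ_lb c hc γ a) (repZ_ub c hc γ a)
      (repZ_lb c hc γ b) (repZ_ub c hc γ b) hex
  set T : Finset ℤ := S.image (repZ c γ) with hT
  have hrep_inj : ∀ x ∈ S, ∀ y ∈ S, repZ c γ x = repZ c γ y → x = y := by
    intro x _ y _ h
    have h2 := congrArg (fun z : ℤ => ((z : ℤ) : ZMod c)) h
    rwa [repZ_cast, repZ_cast] at h2
  have hTcard : T.card = d := by
    rw [hT, Finset.card_image_of_injOn fun x hx y hy h => hrep_inj x hx y hy h, hScard]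
  have hTne : T.Nonempty := by
    rw [← Finset.card_pos, hTcard]; exact hd
  have hgap : ∀ x ∈ T, ∀ z ∈ T, ∀ y : ℤ, x < y → y < z → y ∈ T := by
    intro x hx z hz y hxy hyz
    obtain ⟨ax, hax, haxr⟩ := Finset.mem_image.mp hx
    obtain ⟨az, haz, hazr⟩ := Finset.mem_image.mp hz
    have hxR : (x : ℝ) < (y : ℝ) := by exact_mod_cast hxy
    have hzR : (y : ℝ) < (z : ℝ) := by exact_mod_cast hyz
    have hy1 : γ - c / 2 ≤ (y : ℝ) := by
      have hlb := repZ_lb c hc γ ax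
      rw [haxr] at hlb
      linarith
    have hy2 : (y : ℝ) < γ + c / 2 := by
      have hub := repZ_ub c hc γ az
      rw [hazr] at hub
      linarith
    have hyrep : repZ c γ ((y : ZMod c)) = y := repZ_uniq c hc γ y hy1 hy2
    by_cases hyS : ((y : ZMod c)) ∈ S
    · exact Finset.mem_image.mpr ⟨_, hyS, hyrep⟩
    · exfalso
      have h1 := hdist ax hax _ hyS
      have h2 := hdist az haz _ hyS
      rw [hyrep, haxr] at h1
      rw [hyrep, hazr] at h2
      have hA1 : γ - (y : ℝ) < |γ - (x : ℝ)| :=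
        lt_of_lt_of_le (by linarith) (le_abs_self _)
      have hA2 : (y : ℝ) - γ < |γ - (z : ℝ)| := by
        calc (y : ℝ) - γ < (z : ℝ) - γ := by linarith
          _ ≤ |(z : ℝ) - γ| := le_abs_self _
          _ = |γ - (z : ℝ)| := abs_sub_comm _ _
      rcases abs_cases (γ - (y : ℝ)) with ⟨he, _⟩ | ⟨he, _⟩
      · rw [he] at h1; linarith
      · rw [he] at h2; linarith
  have hTicc := int_no_gaps T hTne hgap
  set l : ℤ := T.min' hTne - 1 with hl
  have hmaxval : T.max' hTne = l + d := by
    have hcard2 : (Finset.Icc (T.min' hTne) (T.max' hTne)).card = d := by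
      rw [← hTicc, hTcard]
    rw [Int.card_Icc] at hcard2
    omega
  refine ⟨((l : ℤ) : ZMod c), ?_⟩
  ext s
  constructor
  · intro hsS
    have hmem : repZ c γ s ∈ T := Finset.mem_image.mpr ⟨s, hsS, rfl⟩
    rw [hTicc, Finset.mem_Icc, hmaxval] at hmem
    refine Finset.mem_image.mpr ⟨(repZ c γ s - l).toNat, Finset.mem_Icc.mpr ⟨by omega, by omega⟩, ?_⟩
    have hjz : (((repZ c γ s - l).toNat : ℕ) : ℤ) = repZ c γ s - l := Int.toNat_of_nonneg (by omega)
    have hcast : (((repZ c γ s - l).toNat : ℕ) : ZMod c) = ((repZ c γ s - l : ℤ) : ZMod c) := by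
      rw [← hjz]
      push_cast
      rfl
    rw [hcast]
    have : ((l : ZMod c)) + ((repZ c γ s - l : ℤ) : ZMod c) = ((repZ c γ s : ℤ) : ZMod c) := by
      push_cast
      ring
    rw [this, repZ_cast]
  · intro hsR
    obtain ⟨j, hj, hjs⟩ := Finset.mem_image.mp hsR
    rw [Finset.mem_Icc] at hj
    have hmem : l + (j : ℤ) ∈ T := by
      rw [hTicc, Finset.mem_Icc, hmaxval]
      constructor <;> [skip; skip] <;> omega
    obtain ⟨a, haS, har⟩ := Finset.mem_image.mp hmem
    have ha2 : a = ((l : ZMod c)) + ((j : ℕ) : ZMod c) := by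
      have := congrArg (fun z : ℤ => ((z : ℤ) : ZMod c)) har
      rw [repZ_cast] at this
      rw [this]
      push_cast
      ring
    rw [← hjs, ← ha2]
    exact haS
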